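/- arXiv:2408.14191 — 3 statements merged into one kernel-verified Lean document; each statement's English description precedes it below -/
import Mathlib

section
/- Let G : [0, ∞) → ℝ be smooth with G(0) = 0 and F(x) = (1 + x)². Suppose all odd-order derivatives of G up to order 2k-1 vanish at 0. Then d^{2k+1}/dρ^{2k+1}|_{ρ=0} (F ∘ G) = 2 · G^{(2k+1)}(0). In particular, all odd derivatives of (1 + G)² vanish at 0 if and only if all odd derivatives of G vanish at 0. -/
open Finset

private lemma itd_add (n : ℕ) (f g : ℝ → ℝ) (hf : ContDiff ℝ (⊤ : ℕ∞) f) (hg : ContDiff ℝ (⊤ : ℕ∞) g)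
    (x : ℝ) :
    iteratedDeriv n (fun y => f y + g y) x = iteratedDeriv n f x + iteratedDeriv n g x := by
  simp only [iteratedDeriv_eq_iteratedFDeriv]
  rw [show (fun y => f y + g y) = f + g from rfl,
    iteratedFDeriv_add_apply (hf.of_le (by exact_mod_cast le_top)).contDiffAt (hg.of_le (by exact_mod_cast le_top)).contDiffAt]
  rfl

private lemma itd_const (n : ℕ) (hn : n ≠ 0) (c : ℝ) (x : ℝ) :
    iteratedDeriv n (fun _ : ℝ => c) x = 0 := by
  rw [iteratedDeriv_eq_iteratedFDeriv, iteratedFDeriv_const_of_ne hn]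
  rfl

private lemma leibniz : ∀ (n : ℕ) (f g : ℝ → ℝ), ContDiff ℝ (⊤ : ℕ∞) f → ContDiff ℝ (⊤ : ℕ∞) g → ∀ x : ℝ,
    iteratedDeriv n (fun y => f y * g y) x =
      ∑ i ∈ range (n + 1),
        (n.choose i : ℝ) * (iteratedDeriv i f x * iteratedDeriv (n - i) g x)
  | 0, f, g, hf, hg, x => by simp
  | (n + 1), f, g, hf, hg, x => by
    have hf' : ContDiff ℝ (⊤ : ℕ∞) (deriv f) := (contDiff_infty_iff_deriv.mp hf).2
    have hg' : ContDiff ℝ (⊤ : ℕ∞) (deriv g) := (contDiff_infty_iff_deriv.mp hg).2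
    have hder : deriv (fun y => f y * g y) =
        fun y => deriv f y * g y + f y * deriv g y := by
      funext y
      exact deriv_mul (hf.differentiable (by simp) y) (hg.differentiable (by simp) y)
    rw [iteratedDeriv_succ', hder,
      itd_add n _ _ (hf'.mul hg) (hf.mul hg') x,
      leibniz n (deriv f) g hf' hg x, leibniz n f (deriv g) hf hg' x]
    have h1 : ∀ i, iteratedDeriv i (deriv f) x = iteratedDeriv (i + 1) f x := by
      intro i; rw [iteratedDeriv_succ']
    have h2 : ∀ i, iteratedDeriv i (deriv g) x = iteratedDeriv (i + 1) g x := by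
      intro i; rw [iteratedDeriv_succ']
    simp only [h1, h2]
    have key2 : (∑ i ∈ range (n + 1),
          (n.choose i : ℝ) * (iteratedDeriv i f x * iteratedDeriv (n - i + 1) g x))
        = ∑ i ∈ range (n + 1),
          (n.choose i : ℝ) * (iteratedDeriv i f x * iteratedDeriv (n + 1 - i) g x) := by
      refine Finset.sum_congr rfl fun i hi => ?_
      simp only [Finset.mem_range] at hi
      rw [show n - i + 1 = n + 1 - i by omega]
    rw [key2]
    rw [Finset.sum_range_succ' (fun i => (((n + 1).choose i : ℕ) : ℝ) *
      (iteratedDeriv i f x * iteratedDeriv (n + 1 - i) g x)) (n + 1)]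
    have hch : ∀ i : ℕ, (((n + 1).choose (i + 1) : ℕ) : ℝ)
        = (n.choose i : ℝ) + (n.choose (i + 1) : ℝ) := by
      intro i; rw [Nat.choose_succ_succ]; push_cast; ring
    have hsub : ∀ i : ℕ, n + 1 - (i + 1) = n - i := fun i => by omega
    simp only [hch, hsub, add_mul]
    rw [Finset.sum_add_distrib]
    have hsecond : (∑ i ∈ range (n + 1),
          (n.choose i : ℝ) * (iteratedDeriv i f x * iteratedDeriv (n + 1 - i) g x))
        = (∑ i ∈ range (n + 1),
            (n.choose (i + 1) : ℝ) * (iteratedDeriv (i + 1) f x * iteratedDeriv (n - i) g x))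
          + (iteratedDeriv 0 f x * iteratedDeriv (n + 1) g x) := by
      rw [Finset.sum_range_succ' (fun i => ((n.choose i : ℕ) : ℝ) *
          (iteratedDeriv i f x * iteratedDeriv (n + 1 - i) g x)) n,
        Finset.sum_range_succ (fun i => ((n.choose (i + 1) : ℕ) : ℝ) *
          (iteratedDeriv (i + 1) f x * iteratedDeriv (n - i) g x)) n]
      simp [hsub, Nat.choose_succ_self]
    rw [hsecond]
    simp only [Nat.choose_zero_right, Nat.cast_one, one_mul, Nat.sub_zero]
    ring

private lemma itd_one_add (G : ℝ → ℝ) (hG : ContDiff ℝ (⊤ : ℕ∞) G) (n : ℕ) (hn : n ≠ 0) (x : ℝ) :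
    iteratedDeriv n (fun y => 1 + G y) x = iteratedDeriv n G x := by
  rw [itd_add n _ _ contDiff_const hG x, itd_const n hn 1 x, zero_add]

private lemma key (G : ℝ → ℝ) (hG : ContDiff ℝ (⊤ : ℕ∞) G) (hG0 : G 0 = 0) (k : ℕ)
    (hodd : ∀ j < k, iteratedDeriv (2 * j + 1) G 0 = 0) :
    iteratedDeriv (2 * k + 1) (fun x => (1 + G x) ^ 2) 0 =
      2 * iteratedDeriv (2 * k + 1) G 0 := by
  have hsq : (fun x => (1 + G x) ^ 2) = fun x => (1 + G x) * (1 + G x) := by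
    funext x; ring
  have h1G : ContDiff ℝ (⊤ : ℕ∞) (fun y => 1 + G y) := contDiff_const.add hG
  rw [hsq, leibniz (2 * k + 1) _ _ h1G h1G 0]
  set n := 2 * k + 1 with hn
  set t : ℕ → ℝ := fun i =>
    (n.choose i : ℝ) * (iteratedDeriv i (fun y => 1 + G y) 0 *
      iteratedDeriv (n - i) (fun y => 1 + G y) 0) with ht
  have hmid : ∀ i ∈ range (n + 1), i ∉ ({0, n} : Finset ℕ) → t i = 0 := by
    intro i hi hins
    simp only [Finset.mem_insert, Finset.mem_singleton, not_or] at hins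
    obtain ⟨hi0, hin⟩ := hins
    simp only [Finset.mem_range] at hi
    rcases Nat.even_or_odd i with ⟨m, hm⟩ | ⟨j, hj⟩
    · -- i even, so n - i is odd, = 2*(k-m)+1 with k-m < k
      have h1 : n - i = 2 * (k - m) + 1 := by omega
      have h2 : k - m < k := by omega
      have : iteratedDeriv (n - i) (fun y => 1 + G y) 0 = 0 := by
        rw [itd_one_add G hG _ (by omega), h1]
        exact hodd _ h2
      simp [ht, this]
    · have h2 : j < k := by omega
      have : iteratedDeriv i (fun y => 1 + G y) 0 = 0 := by
        rw [itd_one_add G hG _ (by omega), hj]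
        exact hodd _ h2
      simp [ht, this]
  have hsubset : ({0, n} : Finset ℕ) ⊆ range (n + 1) := by
    intro i hi
    simp only [Finset.mem_insert, Finset.mem_singleton] at hi
    rcases hi with rfl | rfl <;> simp [Finset.mem_range]
  rw [← Finset.sum_subset hsubset (fun i hi hni => hmid i hi hni)]
  have h0n : (0 : ℕ) ≠ n := by omega
  rw [Finset.sum_pair h0n]
  have hv0 : iteratedDeriv 0 (fun y => 1 + G y) 0 = 1 := by
    simp [iteratedDeriv_zero, hG0]
  have hvn : iteratedDeriv n (fun y => 1 + G y) 0 = iteratedDeriv n G 0 :=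
    itd_one_add G hG n (by omega) 0
  simp only [ht, Nat.sub_zero, Nat.sub_self, Nat.choose_zero_right, Nat.choose_self,
    hv0, hvn]
  ring

theorem odd_derivatives_of_square (G : ℝ → ℝ) (hG : ContDiff ℝ (⊤ : ℕ∞) G) (hG0 : G 0 = 0) :
    (∀ k : ℕ, (∀ j < k, iteratedDeriv (2 * j + 1) G 0 = 0) →
        iteratedDeriv (2 * k + 1) (fun x => (1 + G x) ^ 2) 0 =
          2 * iteratedDeriv (2 * k + 1) G 0) ∧
    ((∀ k : ℕ, iteratedDeriv (2 * k + 1) (fun x => (1 + G x) ^ 2) 0 = 0) ↔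
      (∀ k : ℕ, iteratedDeriv (2 * k + 1) G 0 = 0)) := by
  refine ⟨key G (hG.of_le (by simp)) hG0, ?_, ?_⟩
  · intro hsq k
    induction k using Nat.strong_induction_on with
    | _ k ih =>
      have := key G (hG.of_le (by simp)) hG0 k ih
      have hz := hsq k
      rw [this] at hz
      linarith
  · intro hGodd k
    rw [key G (hG.of_le (by simp)) hG0 k (fun j _ => hGodd j), hGodd k, mul_zero]
end

section
/- Let f : [-1,1] → ℝ be smooth, h > 0, and define G(ρ) = f(1 - hρ)/(2 - hρ). Suppose G^{(2k-1)}(0) = 0. Then G^{(2k+1)}(0) = (h^{2k+1}(2k+1)/4) f^{(2k)}(1) - (h^{2k+1}/2) f^{(2k+1)}(1). Consequently, all odd derivatives of G vanish at ρ = 0 if and only if f^{(2k+1)}(1) = ((2k+1)/2) f^{(2k)}(1) for all k ≥ 0. -/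
open Set Filter
open scoped ContDiff

lemma bc_key (h : ℝ) (hh : 0 < h) (f : ℝ → ℝ)
    (hf : ContDiff ℝ (⊤ : ℕ∞) f) (G : ℝ → ℝ)
    (hG : G = fun ρ : ℝ => f (1 - h * ρ) / (2 - h * ρ)) (n : ℕ) :
    2 * iteratedDeriv (n + 1) G 0 =
      (-h) ^ (n + 1) * iteratedDeriv (n + 1) f 1 + ((n : ℝ) + 1) * h * iteratedDeriv n G 0 := by
  set u : ℝ → ℝ := fun ρ => f (1 - h * ρ) with hu
  have hf' : ContDiff ℝ ∞ f := hf.of_le (by simp)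
  set s : Set ℝ := Set.Iio (2 / h) with hs
  have hsopen : IsOpen s := isOpen_Iio
  have h0s : (0 : ℝ) ∈ s := by
    simp only [hs, Set.mem_Iio]
    positivity
  have hne : ∀ x ∈ s, (2 : ℝ) - h * x ≠ 0 := by
    intro x hx
    have : h * x < 2 := by
      have := (lt_div_iff₀' hh).mp hx
      linarith
    linarith
  have hucd : ContDiff ℝ ∞ u :=
    hf'.comp (contDiff_const.sub (contDiff_const.mul contDiff_id))
  have hGs : ContDiffOn ℝ ∞ G s := by
    rw [hG]
    exact hucd.contDiffOn.div
      ((contDiff_const.sub (contDiff_const.mul contDiff_id)).contDiffOn) hne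
  have hGn : ∀ m : ℕ, ContDiffOn ℝ ∞ (iteratedDeriv m G) s := by
    intro m
    induction m with
    | zero => simpa [iteratedDeriv_zero] using hGs
    | succ m ih =>
        rw [iteratedDeriv_succ]
        exact ih.deriv_of_isOpen hsopen (le_of_eq (by rfl))
  have hGdiff : ∀ m : ℕ, ∀ x ∈ s, DifferentiableAt ℝ (iteratedDeriv m G) x := by
    intro m x hx
    exact ((hGn m).differentiableOn (by simp) x hx).differentiableAt
      (hsopen.mem_nhds hx)
  have hGhd : ∀ m : ℕ, ∀ x ∈ s,
      HasDerivAt (iteratedDeriv m G) (iteratedDeriv (m + 1) G x) x := by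
    intro m x hx
    rw [iteratedDeriv_succ]
    exact (hGdiff m x hx).hasDerivAt
  have hfd : ∀ m : ℕ, Differentiable ℝ (iteratedDeriv m f) := by
    intro m
    rw [iteratedDeriv_eq_iterate]
    exact (hf'.iterate_deriv m).differentiable (by simp)
  have hA : ∀ m : ℕ, ∀ x : ℝ, iteratedDeriv m u x = (-h) ^ m * iteratedDeriv m f (1 - h * x) := by
    intro m
    induction m with
    | zero => intro x; simp [hu]
    | succ m ih =>
        intro x
        rw [iteratedDeriv_succ]
        have hEq : iteratedDeriv m u = fun y => (-h) ^ m * iteratedDeriv m f (1 - h * y) :=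
          funext ih
        rw [hEq]
        have hinner' : HasDerivAt (fun y : ℝ => 1 - h * y) (-h) x := by
          simpa using ((hasDerivAt_id x).const_mul h).const_sub 1
        have hg : HasDerivAt (iteratedDeriv m f) (iteratedDeriv (m + 1) f (1 - h * x))
            (1 - h * x) := by
          rw [iteratedDeriv_succ]
          exact ((hfd m) (1 - h * x)).hasDerivAt
        have hcomp : HasDerivAt (fun y : ℝ => iteratedDeriv m f (1 - h * y))
            (iteratedDeriv (m + 1) f (1 - h * x) * (-h)) x := by
            have hc := HasDerivAt.comp x hg hinner'
            exact hc
        rw [(hcomp.const_mul ((-h) ^ m)).deriv]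
        ring
  have hEqOn : ∀ y ∈ s, u y = (2 - h * y) * G y := by
    intro y hy
    rw [hG]
    simp only [hu]
    rw [mul_div_cancel₀ _ (hne y hy)]
  have hlin : ∀ x : ℝ, HasDerivAt (fun y : ℝ => 2 - h * y) (-h) x := by
    intro x
    simpa using ((hasDerivAt_id x).const_mul h).const_sub 2
  have hB : ∀ m : ℕ, ∀ x ∈ s, iteratedDeriv (m + 1) u x =
      (2 - h * x) * iteratedDeriv (m + 1) G x - ((m : ℝ) + 1) * h * iteratedDeriv m G x := by
    intro m
    induction m with
    | zero =>
        intro x hx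
        have hev : u =ᶠ[nhds x] fun y => (2 - h * y) * G y :=
          eventually_of_mem (hsopen.mem_nhds hx) hEqOn
        have hG0 : HasDerivAt G (iteratedDeriv 1 G x) x := by
          have := hGhd 0 x hx
          rwa [iteratedDeriv_zero] at this
        have hpd : HasDerivAt (fun y => (2 - h * y) * G y)
            ((-h) * G x + (2 - h * x) * iteratedDeriv 1 G x) x := (hlin x).mul hG0
        rw [iteratedDeriv_one, hev.deriv_eq, hpd.deriv, iteratedDeriv_zero]
        push_cast
        ring
    | succ m ih =>
        intro x hx
        have hev : iteratedDeriv (m + 1) u =ᶠ[nhds x]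
            fun y => (2 - h * y) * iteratedDeriv (m + 1) G y
              - ((m : ℝ) + 1) * h * iteratedDeriv m G y :=
          eventually_of_mem (hsopen.mem_nhds hx) ih
        have hprod : HasDerivAt
            (fun y => (2 - h * y) * iteratedDeriv (m + 1) G y
              - ((m : ℝ) + 1) * h * iteratedDeriv m G y)
            ((-h) * iteratedDeriv (m + 1) G x + (2 - h * x) * iteratedDeriv (m + 2) G x
              - ((m : ℝ) + 1) * h * iteratedDeriv (m + 1) G x) x :=
          ((hlin x).mul (hGhd (m + 1) x hx)).sub ((hGhd m x hx).const_mul (((m : ℝ) + 1) * h))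
        rw [iteratedDeriv_succ, hev.deriv_eq, hprod.deriv]
        push_cast
        ring
  have e1 := hA (n + 1) 0
  have e2 := hB n 0 h0s
  rw [e2] at e1
  simp only [mul_zero, sub_zero] at e1
  linarith [e1]

theorem boundary_condition_characterization (h : ℝ) (hh : 0 < h) (f : ℝ → ℝ)
    (hf : ContDiff ℝ (⊤ : ℕ∞) f) (G : ℝ → ℝ)
    (hG : G = fun ρ : ℝ => f (1 - h * ρ) / (2 - h * ρ)) :
    (∀ k : ℕ, 1 ≤ k → iteratedDeriv (2 * k - 1) G 0 = 0 →
        iteratedDeriv (2 * k + 1) G 0 =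
          h ^ (2 * k + 1) * (2 * k + 1) / 4 * iteratedDeriv (2 * k) f 1 -
            h ^ (2 * k + 1) / 2 * iteratedDeriv (2 * k + 1) f 1) ∧
    ((∀ k : ℕ, iteratedDeriv (2 * k + 1) G 0 = 0) ↔
      (∀ k : ℕ, iteratedDeriv (2 * k + 1) f 1 =
        (2 * k + 1) / 2 * iteratedDeriv (2 * k) f 1)) := by
  have key := bc_key h hh f hf G hG
  have hG0 : G 0 = f 1 / 2 := by
    rw [hG]; norm_num
  have part1 : ∀ k : ℕ, 1 ≤ k → iteratedDeriv (2 * k - 1) G 0 = 0 →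
      iteratedDeriv (2 * k + 1) G 0 =
        h ^ (2 * k + 1) * (2 * k + 1) / 4 * iteratedDeriv (2 * k) f 1 -
          h ^ (2 * k + 1) / 2 * iteratedDeriv (2 * k + 1) f 1 := by
    intro k hk hodd
    obtain ⟨j, rfl⟩ : ∃ j, k = j + 1 := ⟨k - 1, (Nat.succ_pred_eq_of_pos hk).symm⟩
    have hodd' : iteratedDeriv (2 * j + 1) G 0 = 0 := by
      have i0 : 2 * (j + 1) - 1 = 2 * j + 1 := by omega
      rwa [i0] at hodd
    have e1 := key (2 * j + 1)
    have e2 := key (2 * j + 1 + 1)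
    have i1 : 2 * (j + 1) = 2 * j + 1 + 1 := by ring
    rw [i1]
    rw [hodd'] at e1
    rw [Even.neg_pow ⟨j + 1, by ring⟩ h] at e1
    rw [Odd.neg_pow ⟨j + 1, by ring⟩ h] at e2
    push_cast at e1 e2 ⊢
    linear_combination e2 / 2 + ((2 * (j : ℝ) + 3) * h / 4) * e1
  refine ⟨part1, ?_, ?_⟩
  · intro hodd k
    rcases Nat.eq_zero_or_pos k with rfl | hk
    · have e := key 0
      have h1 := hodd 0
      norm_num at e h1 ⊢
      rw [hG0] at e
      have hz : h * (deriv f 1 - f 1 / 2) = 0 := by linear_combination e - 2 * h1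
      rcases mul_eq_zero.mp hz with h' | h'
      · exact absurd h' hh.ne'
      · linarith
    · have hodd' : iteratedDeriv (2 * k - 1) G 0 = 0 := by
        have := hodd (k - 1)
        have i0 : 2 * (k - 1) + 1 = 2 * k - 1 := by omega
        rwa [i0] at this
      have e := part1 k hk hodd'
      rw [hodd k] at e
      have hp : h ^ (2 * k + 1) ≠ 0 := pow_ne_zero _ hh.ne'
      have hz : h ^ (2 * k + 1) *
          (((2 * k : ℝ) + 1) / 4 * iteratedDeriv (2 * k) f 1
            - 1 / 2 * iteratedDeriv (2 * k + 1) f 1) = 0 := by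
        linear_combination -e
      rcases mul_eq_zero.mp hz with h' | h'
      · exact absurd h' hp
      · linarith
  · intro hcond k
    induction k with
    | zero =>
        have e := key 0
        have hc := hcond 0
        norm_num at e hc ⊢
        rw [hG0] at e
        linear_combination e / 2 - (h / 2) * hc
    | succ k ih =>
        have e1 := key (2 * k + 1)
        have e2 := key (2 * k + 1 + 1)
        have hc := hcond (k + 1)
        have i1 : 2 * (k + 1) = 2 * k + 1 + 1 := by ring
        rw [i1] at hc ⊢
        rw [ih] at e1
        rw [Even.neg_pow ⟨k + 1, by ring⟩ h] at e1
        rw [Odd.neg_pow ⟨k + 1, by ring⟩ h] at e2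
        have hG2 : iteratedDeriv (2 * k + 1 + 1) G 0 =
            h ^ (2 * k + 1 + 1) * iteratedDeriv (2 * k + 1 + 1) f 1 / 2 := by
          push_cast at e1 ⊢
          linear_combination e1 / 2
        push_cast at e2 hc hG2 ⊢
        linear_combination e2 / 2 + ((2 * (k : ℝ) + 3) * h / 2) * hG2
          - (h ^ (2 * k + 1 + 1 + 1) / 2) * hc
end

section
/- Let ξ_κ, ξ_ℓ > 0 be rationally independent real numbers with ξ_κ + ξ_ℓ < 1. Then the orbit of 0 under the group generated by the reflections R_0, R_{-ξ_κ}, R_{-ξ_ℓ} (where R_a(x) = 2a - x), restricted to points reachable by a sequence of generators staying inside [-1, 1] at every step, is dense in [-1, 1]. -/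
/-- Points reachable from `0` by the reflections about `0`, `-ξκ`, `-ξℓ`, staying
inside `[-1, 1]` at every step. -/
inductive Reach (ξκ ξℓ : ℝ) : ℝ → Prop
  | zero : Reach ξκ ξℓ 0
  | refl0 {x : ℝ} : Reach ξκ ξℓ x → (-x) ∈ Set.Icc (-1 : ℝ) 1 → Reach ξκ ξℓ (-x)
  | reflκ {x : ℝ} : Reach ξκ ξℓ x → (-2 * ξκ - x) ∈ Set.Icc (-1 : ℝ) 1 →
      Reach ξκ ξℓ (-2 * ξκ - x)
  | reflℓ {x : ℝ} : Reach ξκ ξℓ x → (-2 * ξℓ - x) ∈ Set.Icc (-1 : ℝ) 1 →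
      Reach ξκ ξℓ (-2 * ξℓ - x)

namespace ReachAux

variable {ξκ ξℓ : ℝ}

lemma mem_Icc (h : Reach ξκ ξℓ x) : x ∈ Set.Icc (-1 : ℝ) 1 := by
  induction h with
  | zero => constructor <;> norm_num
  | refl0 _ h _ => exact h
  | reflκ _ h _ => exact h
  | reflℓ _ h _ => exact h

lemma neg (h : Reach ξκ ξℓ x) : Reach ξκ ξℓ (-x) := by
  have hx := mem_Icc h
  exact h.refl0 ⟨by linarith [hx.2], by linarith [hx.1]⟩

lemma addκ (h : Reach ξκ ξℓ x) (hκ : 0 < ξκ) (h1 : x + 2 * ξκ ≤ 1) :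
    Reach ξκ ξℓ (x + 2 * ξκ) := by
  have hx := mem_Icc h
  have h2 : Reach ξκ ξℓ (-2 * ξκ - x) :=
    h.reflκ ⟨by linarith [hx.2], by linarith [hx.1]⟩
  have h3 := h2.refl0 (x := -2 * ξκ - x)
  have : -(-2 * ξκ - x) = x + 2 * ξκ := by ring
  rw [this] at h3
  exact h3 ⟨by linarith [hx.1], h1⟩

lemma subκ (h : Reach ξκ ξℓ x) (hκ : 0 < ξκ) (h1 : -1 ≤ x - 2 * ξκ) :
    Reach ξκ ξℓ (x - 2 * ξκ) := by
  have hx := mem_Icc h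
  have h2 := (neg h).reflκ (x := -x)
  have : -2 * ξκ - -x = x - 2 * ξκ := by ring
  rw [this] at h2
  exact h2 ⟨h1, by linarith [hx.2]⟩

lemma addℓ (h : Reach ξκ ξℓ x) (hℓ : 0 < ξℓ) (h1 : x + 2 * ξℓ ≤ 1) :
    Reach ξκ ξℓ (x + 2 * ξℓ) := by
  have hx := mem_Icc h
  have h2 : Reach ξκ ξℓ (-2 * ξℓ - x) :=
    h.reflℓ ⟨by linarith [hx.2], by linarith [hx.1]⟩
  have h3 := h2.refl0 (x := -2 * ξℓ - x)
  have : -(-2 * ξℓ - x) = x + 2 * ξℓ := by ring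
  rw [this] at h3
  exact h3 ⟨by linarith [hx.1], h1⟩

lemma subℓ (h : Reach ξκ ξℓ x) (hℓ : 0 < ξℓ) (h1 : -1 ≤ x - 2 * ξℓ) :
    Reach ξκ ξℓ (x - 2 * ξℓ) := by
  have hx := mem_Icc h
  have h2 := (neg h).reflℓ (x := -x)
  have : -2 * ξℓ - -x = x - 2 * ξℓ := by ring
  rw [this] at h2
  exact h2 ⟨h1, by linarith [hx.2]⟩

/-- Both coefficients nonnegative. -/
lemma reach_nonneg (hκ : 0 < ξκ) (hℓ : 0 < ξℓ) :
    ∀ n a b : ℕ, a + b = n → 2 * a * ξκ + 2 * b * ξℓ ≤ 1 →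
      Reach ξκ ξℓ (2 * a * ξκ + 2 * b * ξℓ) := by
  intro n
  induction n with
  | zero =>
    intro a b hab _
    obtain ⟨rfl, rfl⟩ := Nat.add_eq_zero.mp hab
    simpa using Reach.zero
  | succ n ih =>
    intro a b hab h1
    rcases Nat.eq_zero_or_pos a with rfl | ha
    · rcases Nat.eq_zero_or_pos b with rfl | hb
      · simpa using Reach.zero
      · obtain ⟨b', rfl⟩ := Nat.exists_eq_succ_of_ne_zero hb.ne'
        have hb' : (b' : ℝ) ≥ 0 := Nat.cast_nonneg _
        have key : Reach ξκ ξℓ (2 * (0:ℕ) * ξκ + 2 * b' * ξℓ) := by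
          refine ih 0 b' (by omega) ?_
          push_cast at h1 ⊢
          nlinarith
        have := addℓ key hℓ (by push_cast at h1 ⊢; nlinarith)
        convert this using 1
        push_cast; ring
    · obtain ⟨a', rfl⟩ := Nat.exists_eq_succ_of_ne_zero ha.ne'
      have hb' : (b : ℝ) ≥ 0 := Nat.cast_nonneg _
      have key : Reach ξκ ξℓ (2 * (a':ℝ) * ξκ + 2 * b * ξℓ) := by
        have := ih a' b (by omega) (by push_cast at h1 ⊢; nlinarith)
        push_cast at this ⊢
        exact this
      have := addκ key hκ (by push_cast at h1 ⊢; nlinarith)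
      convert this using 1
      push_cast; ring

/-- Mixed signs: `a` copies of `+2ξκ` and `b` copies of `-2ξℓ`. -/
lemma reach_mixed (hκ : 0 < ξκ) (hℓ : 0 < ξℓ) (hsmall : ξκ + ξℓ < 1) :
    ∀ n a b : ℕ, a + b = n → 2 * a * ξκ - 2 * b * ξℓ ∈ Set.Icc (-1 : ℝ) 1 →
      Reach ξκ ξℓ (2 * a * ξκ - 2 * b * ξℓ) := by
  intro n
  induction n with
  | zero =>
    intro a b hab _
    obtain ⟨rfl, rfl⟩ := Nat.add_eq_zero.mp hab
    simpa using Reach.zero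
  | succ n ih =>
    intro a b hab hIcc
    obtain ⟨hlo, hhi⟩ := hIcc
    rcases Nat.eq_zero_or_pos a with rfl | ha
    · -- only negative steps: t = -2bξℓ, b = n+1 > 0
      obtain ⟨b', rfl⟩ : ∃ b', b = b' + 1 := ⟨n, by omega⟩
      have hb' : (b' : ℝ) ≥ 0 := Nat.cast_nonneg _
      push_cast at hlo hhi
      have key : Reach ξκ ξℓ (2 * (0:ℕ) * ξκ - 2 * b' * ξℓ) := by
        refine ih 0 b' (by omega) ⟨?_, ?_⟩ <;> push_cast <;> nlinarith
      have := subℓ key hℓ (by push_cast; nlinarith)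
      convert this using 1
      push_cast; ring
    · obtain ⟨a', rfl⟩ := Nat.exists_eq_succ_of_ne_zero ha.ne'
      have ha' : (a' : ℝ) ≥ 0 := Nat.cast_nonneg _
      push_cast at hlo hhi
      rcases Nat.eq_zero_or_pos b with rfl | hb
      · push_cast at hlo hhi
        have key : Reach ξκ ξℓ (2 * (a':ℝ) * ξκ - 2 * (0:ℕ) * ξℓ) := by
          have := ih a' 0 (by omega) ⟨by push_cast; nlinarith, by push_cast; nlinarith⟩
          push_cast at this ⊢; exact this
        have := addκ key hκ (by push_cast; nlinarith)
        convert this using 1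
        push_cast; ring
      · obtain ⟨b', rfl⟩ := Nat.exists_eq_succ_of_ne_zero hb.ne'
        have hb' : (b' : ℝ) ≥ 0 := Nat.cast_nonneg _
        push_cast at hlo hhi
        -- either last step was +2ξκ or -2ξℓ
        by_cases hc : -1 ≤ 2 * ((a':ℝ)+1) * ξκ - 2 * ((b':ℝ)+1) * ξℓ - 2 * ξκ
        · have key : Reach ξκ ξℓ (2 * (a':ℝ) * ξκ - 2 * ((b':ℝ)+1) * ξℓ) := by
            have := ih a' (b'+1) (by omega) ⟨by push_cast; nlinarith, by push_cast; nlinarith⟩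
            push_cast at this ⊢; exact this
          have := addκ key hκ (by nlinarith)
          convert this using 1
          push_cast; ring
        · -- then t + 2ξℓ ≤ 1
          push_neg at hc
          have key : Reach ξκ ξℓ (2 * ((a':ℝ)+1) * ξκ - 2 * b' * ξℓ) := by
            have := ih (a'+1) b' (by omega) ⟨by push_cast; nlinarith, by push_cast; nlinarith⟩
            push_cast at this ⊢; exact this
          have := subℓ key hℓ (by nlinarith)
          convert this using 1
          push_cast; ring

/-- Any integer combination in `[-1,1]` is reachable. -/
lemma reach_int (hκ : 0 < ξκ) (hℓ : 0 < ξℓ) (hsmall : ξκ + ξℓ < 1)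
    (a b : ℤ) (h : 2 * a * ξκ + 2 * b * ξℓ ∈ Set.Icc (-1 : ℝ) 1) :
    Reach ξκ ξℓ (2 * a * ξκ + 2 * b * ξℓ) := by
  obtain ⟨hlo, hhi⟩ := h
  rcases le_or_gt 0 a with ha | ha <;> rcases le_or_gt 0 b with hb | hb
  · -- a ≥ 0, b ≥ 0
    lift a to ℕ using ha; lift b to ℕ using hb
    have := reach_nonneg hκ hℓ (a + b) a b rfl (by push_cast at hhi ⊢; linarith)
    push_cast at this ⊢; exact this
  · -- a ≥ 0, b < 0
    lift a to ℕ using ha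
    obtain ⟨b', rfl⟩ : ∃ b' : ℕ, b = -(b' : ℤ) :=
      ⟨b.natAbs, by omega⟩
    have := reach_mixed hκ hℓ hsmall (a + b') a b' rfl
      ⟨by push_cast at hlo ⊢; linarith, by push_cast at hhi ⊢; linarith⟩
    convert this using 1
    push_cast; ring
  · -- a < 0, b ≥ 0 : negate the mixed case
    lift b to ℕ using hb
    obtain ⟨a', rfl⟩ : ∃ a' : ℕ, a = -(a' : ℤ) := ⟨a.natAbs, by omega⟩
    have := neg (reach_mixed hκ hℓ hsmall (a' + b) a' b rfl
      ⟨by push_cast at hhi ⊢; linarith, by push_cast at hlo ⊢; linarith⟩)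
    convert this using 1
    push_cast; ring
  · -- a < 0, b < 0 : negate the nonneg case
    obtain ⟨a', rfl⟩ : ∃ a' : ℕ, a = -(a' : ℤ) := ⟨a.natAbs, by omega⟩
    obtain ⟨b', rfl⟩ : ∃ b' : ℕ, b = -(b' : ℤ) := ⟨b.natAbs, by omega⟩
    have := neg (reach_nonneg hκ hℓ (a' + b') a' b' rfl
      (by push_cast at hlo ⊢; linarith))
    convert this using 1
    push_cast; ring

end ReachAux

theorem orbit_dense (ξκ ξℓ : ℝ) (hκ : 0 < ξκ) (hℓ : 0 < ξℓ)
    (hindep : ∀ a b : ℤ, (a : ℝ) * ξκ + (b : ℝ) * ξℓ = 0 → a = 0 ∧ b = 0)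
    (hsmall : ξκ + ξℓ < 1) :
    Set.Icc (-1 : ℝ) 1 ⊆ closure {x : ℝ | Reach ξκ ξℓ x} := by
  -- the subgroup of integer combinations
  set S : AddSubgroup ℝ :=
    { carrier := {x : ℝ | ∃ a b : ℤ, x = 2 * a * ξκ + 2 * b * ξℓ}
      zero_mem' := ⟨0, 0, by push_cast; ring⟩
      add_mem' := by
        rintro x y ⟨a, b, rfl⟩ ⟨c, d, rfl⟩
        exact ⟨a + c, b + d, by push_cast; ring⟩
      neg_mem' := by
        rintro x ⟨a, b, rfl⟩
        exact ⟨-a, -b, by push_cast; ring⟩ } with hS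
  have hdense : Dense (S : Set ℝ) := by
    rcases S.dense_or_cyclic with h | ⟨g, hg⟩
    · exact h
    · exfalso
      have hκS : 2 * ξκ ∈ S := ⟨1, 0, by push_cast; ring⟩
      have hℓS : 2 * ξℓ ∈ S := ⟨0, 1, by push_cast; ring⟩
      rw [hg, AddSubgroup.mem_closure_singleton] at hκS hℓS
      obtain ⟨m, hm⟩ := hκS
      obtain ⟨n, hn⟩ := hℓS
      have hz : ((2 * n : ℤ) : ℝ) * ξκ + ((-(2 * m) : ℤ) : ℝ) * ξℓ = 0 := by
        push_cast
        have : (n : ℝ) * (m • g) - (m : ℝ) * (n • g) = 0 := by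
          simp [zsmul_eq_mul]; ring
        rw [hm, hn] at this
        linarith
      obtain ⟨h1, h2⟩ := hindep _ _ hz
      have : m = 0 := by omega
      rw [this] at hm
      simp at hm
      nlinarith
  -- it suffices to cover the open interval
  have hIoo : Set.Ioo (-1 : ℝ) 1 ⊆ closure {x : ℝ | Reach ξκ ξℓ x} := by
    rintro y ⟨hy1, hy2⟩
    rw [mem_closure_iff]
    intro U hU hyU
    obtain ⟨ε, hε, hball⟩ := Metric.isOpen_iff.mp hU y hyU
    set δ := min ε (min (1 - y) (y + 1)) with hδ
    have hδpos : 0 < δ := by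
      apply lt_min hε
      exact lt_min (by linarith) (by linarith)
    obtain ⟨g, hgd, hgS⟩ := Metric.dense_iff.mp hdense y δ hδpos
    obtain ⟨a, b, rfl⟩ := hgS
    rw [Metric.mem_ball, Real.dist_eq] at hgd
    have hga : |2 * (a:ℝ) * ξκ + 2 * b * ξℓ - y| < δ := hgd
    have h1 : 2 * (a:ℝ) * ξκ + 2 * b * ξℓ ∈ Set.Icc (-1 : ℝ) 1 := by
      rw [abs_lt] at hga
      have hδ1 : δ ≤ 1 - y := le_trans (min_le_right _ _) (min_le_left _ _)
      have hδ2 : δ ≤ y + 1 := le_trans (min_le_right _ _) (min_le_right _ _)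
      constructor
      · linarith [hga.1]
      · linarith [hga.2]
    refine ⟨2 * (a:ℝ) * ξκ + 2 * b * ξℓ, ?_, ?_⟩
    · apply hball
      rw [Metric.mem_ball, Real.dist_eq]
      exact lt_of_lt_of_le hga (min_le_left _ _)
    · exact ReachAux.reach_int hκ hℓ hsmall a b h1
  calc Set.Icc (-1 : ℝ) 1 = closure (Set.Ioo (-1 : ℝ) 1) := (closure_Ioo (by norm_num)).symm
    _ ⊆ closure (closure {x : ℝ | Reach ξκ ξℓ x}) := closure_mono hIoo
    _ = closure {x : ℝ | Reach ξκ ξℓ x} := closure_closure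
end
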